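/- arXiv:1511.05653 — 4 statements merged into one kernel-verified Lean document; each statement's English description precedes it below -/
import Mathlib

section
/- Let w ~ N(0,1), ξ ~ N(0,σ²) independent, with σ ≥ C for a sufficiently large absolute constant C, and 0 ≤ h ≤ log σ. Then |E[w·r(wh+ξ)] − h/2| ≤ C'·(log σ)⁴/σ³ for some absolute constant C'. -/
/-!
The expectation is exactly `h / 2`. Since `w` and `ξ` are independent centred Gaussians, the pair
`(w, ξ)` has the same law as `(-w, -ξ)`, so `E[w r(wh + ξ)] = E[-w r(-(wh + ξ))]`. Averaging the
two and using `r(z) - r(-z) = z` gives `E[w (wh + ξ)] / 2 = (h E[w²] + E[w] E[ξ]) / 2 = h / 2`.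
-/

open MeasureTheory ProbabilityTheory Real

lemma mul_max_zero_add_neg_mul_max_neg_zero (a b : ℝ) :
    a * max b 0 + -a * max (-b) 0 = a * b := by
  linear_combination a * max_zero_sub_max_neg_zero_eq_self b

namespace ProbabilityTheory

variable {Ω : Type*} {mΩ : MeasurableSpace Ω} {P : Measure Ω}

lemma integral_mul_max_zero_of_identDistrib_neg {X Z : Ω → ℝ}
    (hsymm : IdentDistrib (fun ω ↦ (X ω, Z ω)) (fun ω ↦ (-X ω, -Z ω)) P P)
    (hXZ : Integrable (fun ω ↦ X ω * Z ω) P) :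
    ∫ ω, X ω * max (Z ω) 0 ∂P = (∫ ω, X ω * Z ω ∂P) / 2 := by
  have hF : Continuous fun p : ℝ × ℝ ↦ p.1 * max p.2 0 := by fun_prop
  have hmirror := hsymm.comp hF.measurable
  have hint : Integrable (fun ω ↦ X ω * max (Z ω) 0) P := by
    refine hXZ.mono (hF.measurable.comp_aemeasurable hsymm.aemeasurable_fst).aestronglyMeasurable
      (Filter.Eventually.of_forall fun ω ↦ ?_)
    rw [Real.norm_eq_abs, Real.norm_eq_abs, abs_mul, abs_mul, abs_of_nonneg (le_max_right (Z ω) 0)]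
    gcongr
    exact max_le (le_abs_self _) (abs_nonneg _)
  have hint' : Integrable (fun ω ↦ -X ω * max (-Z ω) 0) P := hmirror.integrable_iff.mp hint
  have hsum := integral_add hint hint'
  simp only [mul_max_zero_add_neg_mul_max_neg_zero] at hsum
  have heq : ∫ ω, X ω * max (Z ω) 0 ∂P = ∫ ω, -X ω * max (-Z ω) 0 ∂P := hmirror.integral_eq
  linarith

section Independent

variable [IsProbabilityMeasure P] {X Y : Ω → ℝ}

lemma integrable_mul_mul_const_add_of_indepFun (hX : MemLp X 2 P) (hY : Integrable Y P)
    (hXY : X ⟂ᵢ[P] Y) (c : ℝ) :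
    Integrable (fun ω ↦ X ω * (X ω * c + Y ω)) P := by
  have hsplit : (fun ω ↦ X ω * (X ω * c + Y ω)) = fun ω ↦ c * X ω ^ 2 + (X * Y) ω := by
    ext ω; simp only [Pi.mul_apply]; ring
  rw [hsplit]
  exact (hX.integrable_sq.const_mul c).add (hXY.integrable_mul (hX.integrable one_le_two) hY)

lemma integral_mul_mul_const_add_of_indepFun (hX : MemLp X 2 P) (hY : Integrable Y P)
    (hXY : X ⟂ᵢ[P] Y) (c : ℝ) :
    ∫ ω, X ω * (X ω * c + Y ω) ∂P = c * ∫ ω, X ω ^ 2 ∂P + (∫ ω, X ω ∂P) * ∫ ω, Y ω ∂P := by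
  have hsplit : (fun ω ↦ X ω * (X ω * c + Y ω)) = fun ω ↦ c * X ω ^ 2 + (X * Y) ω := by
    ext ω; simp only [Pi.mul_apply]; ring
  rw [hsplit, integral_add (hX.integrable_sq.const_mul c)
      (hXY.integrable_mul (hX.integrable one_le_two) hY), integral_const_mul,
    hXY.integral_mul_eq_mul_integral hX.aestronglyMeasurable hY.aestronglyMeasurable]

end Independent

lemma HasLaw.of_map_eq {𝓧 : Type*} {m𝓧 : MeasurableSpace 𝓧} {X : Ω → 𝓧} {μ : Measure 𝓧}
    [NeZero μ] (h : P.map X = μ) : HasLaw X μ P :=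
  ⟨aemeasurable_of_map_neZero (h ▸ inferInstance), h⟩

lemma integral_sq_gaussianReal (μ : ℝ) (v : NNReal) :
    ∫ x, x ^ 2 ∂gaussianReal μ v = v + μ ^ 2 := by
  have := variance_eq_sub (memLp_id_gaussianReal (μ := μ) (v := v) 2)
  simp only [variance_id_gaussianReal, integral_id_gaussianReal, Pi.pow_apply, id_eq] at this
  linarith

section Gaussian

variable {X : Ω → ℝ} {v : NNReal}

lemma HasLaw.memLp_of_gaussianReal {μ : ℝ} (hX : HasLaw X (gaussianReal μ v) P) {p : ENNReal}
    (hp : p ≠ ⊤) : MemLp X p P := by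
  have hid := memLp_id_gaussianReal' (μ := μ) (v := v) p hp
  rw [← hX.map_eq] at hid
  exact (memLp_map_measure_iff hid.aestronglyMeasurable hX.aemeasurable).mp hid

lemma HasLaw.identDistrib_neg_of_gaussianReal (hX : HasLaw X (gaussianReal 0 v) P) :
    IdentDistrib X (-X) P P :=
  hX.identDistrib (by simpa using gaussianReal_neg hX)

end Gaussian

end ProbabilityTheory

theorem stmt2 :
    ∃ C C' : ℝ, 0 < C ∧ 0 < C' ∧
      ∀ (σ h : ℝ), C ≤ σ → 0 ≤ h → h ≤ Real.log σ →
      ∀ (Ω : Type) (_ : MeasureSpace Ω) (_ : IsProbabilityMeasure (ℙ : Measure Ω))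
        (w ξ : Ω → ℝ),
        Measure.map w ℙ = gaussianReal 0 1 →
        Measure.map ξ ℙ = gaussianReal 0 (Real.toNNReal (σ ^ 2)) →
        IndepFun w ξ ℙ →
        |(∫ ω, w ω * max (w ω * h + ξ ω) 0 ∂ℙ) - h / 2| ≤
          C' * (Real.log σ) ^ 4 / σ ^ 3 := by
  refine ⟨1, 1, one_pos, one_pos, fun σ h hσ _ _ Ω _ _ w ξ hw hξ hwξ ↦ ?_⟩
  have hwLaw : HasLaw w (gaussianReal 0 1) ℙ := .of_map_eq hw
  have hξLaw : HasLaw ξ (gaussianReal 0 (σ ^ 2).toNNReal) ℙ := .of_map_eq hξ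
  have hwL2 : MemLp w 2 ℙ := hwLaw.memLp_of_gaussianReal (by simp)
  have hξL1 : Integrable ξ ℙ :=
    memLp_one_iff_integrable.mp (hξLaw.memLp_of_gaussianReal (by simp))
  have hsymm : IdentDistrib (fun ω ↦ (w ω, w ω * h + ξ ω))
      (fun ω ↦ (-w ω, -(w ω * h + ξ ω))) ℙ ℙ := by
    have hpair := hwLaw.identDistrib_neg_of_gaussianReal.prodMk
      hξLaw.identDistrib_neg_of_gaussianReal hwξ (hwξ.comp measurable_neg measurable_neg)
    convert hpair.comp (u := fun p : ℝ × ℝ ↦ (p.1, p.1 * h + p.2)) (by fun_prop) using 1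
    · rfl
    · funext ω
      simp only [Function.comp_apply, Pi.neg_apply, Prod.mk.injEq, true_and]
      ring
  have hmean : ∫ ω, w ω * (w ω * h + ξ ω) ∂ℙ = h := by
    have hw2 : ∫ ω, w ω ^ 2 ∂ℙ = ∫ x, x ^ 2 ∂gaussianReal 0 1 :=
      hwLaw.integral_comp (f := fun x ↦ x ^ 2) (by fun_prop)
    rw [integral_mul_mul_const_add_of_indepFun hwL2 hξL1 hwξ, hw2, integral_sq_gaussianReal,
      hwLaw.integral_eq, integral_id_gaussianReal]
    simp
  rw [integral_mul_max_zero_of_identDistrib_neg hsymm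
      (integrable_mul_mul_const_add_of_indepFun hwL2 hξL1 hwξ h), hmean, sub_self, abs_zero]
  have : 0 < σ := one_pos.trans_le hσ
  positivity
end

section
/- Let z ~ N(0,1), φ the density of N(0,σ²) with σ sufficiently large, and 0 ≤ r ≤ 10 log σ. Define G(z) = ∫₀^{rz}(rz−y)²φ(y) dy and H(z) = (z²−1)G(z). Then E[|H(z)|] ≤ C·polylog(σ)/σ for an absolute constant C. -/
/-!
Since the density is at most `1/σ`, the integrand of `G(z)` is at most `(rz)²/σ` on an
interval of length `|rz|`, so `|H(z)| ≤ (r³/σ)(|z|⁵ + |z|³)`. Gaussian moments are finite, and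
`r³ ≤ 1000 (log σ)³`, which gives the bound with `p = 3`.
-/

open MeasureTheory ProbabilityTheory Real intervalIntegral

lemma abs_gaussian_density_le_inv {σ : ℝ} (hσ : 0 < σ) (x : ℝ) :
    |1 / (σ * √(2 * π)) * exp (-(x ^ 2) / (2 * σ ^ 2))| ≤ 1 / σ := by
  have h_exp : exp (-(x ^ 2) / (2 * σ ^ 2)) ≤ 1 :=
    exp_le_one_iff.mpr (div_nonpos_of_nonpos_of_nonneg (by nlinarith) (by positivity))
  have h_sqrt : 1 ≤ √(2 * π) := one_le_sqrt.mpr (by linarith [pi_gt_three])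
  rw [abs_of_nonneg (by positivity)]
  calc 1 / (σ * √(2 * π)) * exp (-(x ^ 2) / (2 * σ ^ 2)) ≤ 1 / (σ * √(2 * π)) * 1 := by
        gcongr
    _ ≤ 1 / σ := by
        rw [mul_one]
        exact one_div_le_one_div_of_le hσ (le_mul_of_one_le_right hσ.le h_sqrt)

lemma abs_integral_sq_sub_mul_le {f : ℝ → ℝ} {B : ℝ} (hf : ∀ y, |f y| ≤ B) (a : ℝ) :
    |∫ y in (0 : ℝ)..a, (a - y) ^ 2 * f y| ≤ B * |a| ^ 3 := by
  have h_pt : ∀ y ∈ Set.uIoc (0 : ℝ) a, ‖(a - y) ^ 2 * f y‖ ≤ a ^ 2 * B := by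
    intro y hy
    have h_sq : (a - y) ^ 2 ≤ a ^ 2 := by
      rcases Set.mem_uIoc.mp hy with ⟨h₁, h₂⟩ | ⟨h₁, h₂⟩ <;> nlinarith
    rw [norm_mul, norm_pow, Real.norm_eq_abs, Real.norm_eq_abs, sq_abs]
    exact mul_le_mul h_sq (hf y) (abs_nonneg _) (sq_nonneg a)
  calc |∫ y in (0 : ℝ)..a, (a - y) ^ 2 * f y| ≤ a ^ 2 * B * |a - 0| :=
        norm_integral_le_of_norm_le_const h_pt
    _ = B * |a| ^ 3 := by rw [sub_zero, ← sq_abs a]; ring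

lemma abs_sq_sub_one_mul_integral_le {f : ℝ → ℝ} {B r : ℝ} (hf : ∀ y, |f y| ≤ B) (hr : 0 ≤ r)
    (z : ℝ) :
    |(z ^ 2 - 1) * ∫ y in (0 : ℝ)..r * z, (r * z - y) ^ 2 * f y| ≤
      B * r ^ 3 * (|z| ^ 5 + |z| ^ 3) := by
  have hB : 0 ≤ B := (abs_nonneg _).trans (hf 0)
  have h_poly : |z ^ 2 - 1| ≤ |z| ^ 2 + 1 :=
    (abs_sub _ _).trans_eq (by rw [abs_pow, abs_one])
  calc |(z ^ 2 - 1) * ∫ y in (0 : ℝ)..r * z, (r * z - y) ^ 2 * f y|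
        ≤ (|z| ^ 2 + 1) * (B * |r * z| ^ 3) := by
          rw [abs_mul]
          exact mul_le_mul h_poly (abs_integral_sq_sub_mul_le hf _) (abs_nonneg _)
            (by positivity)
    _ = B * r ^ 3 * (|z| ^ 5 + |z| ^ 3) := by rw [abs_mul, abs_of_nonneg hr]; ring

lemma integrable_abs_pow_gaussianReal (μ : ℝ) (v : NNReal) (n : ℕ) :
    Integrable (fun z : ℝ => |z| ^ n) (gaussianReal μ v) :=
  (memLp_id_gaussianReal' (n : ENNReal) (ENNReal.natCast_ne_top n)).integrable_norm_pow'

theorem stmt5 :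
    ∃ (C σ₀ : ℝ) (p : ℕ), 0 < C ∧ 0 < σ₀ ∧
      ∀ (σ r : ℝ), σ₀ ≤ σ → 0 ≤ r → r ≤ 10 * Real.log σ →
      ∀ (φ G H : ℝ → ℝ),
        (∀ x, φ x = (1 / (σ * Real.sqrt (2 * π))) * Real.exp (-(x ^ 2) / (2 * σ ^ 2))) →
        (∀ z : ℝ, G z = ∫ y in (0 : ℝ)..(r * z), (r * z - y) ^ 2 * φ y) →
        (∀ z : ℝ, H z = (z ^ 2 - 1) * G z) →
        ∫ z, |H z| ∂(gaussianReal 0 1) ≤ C * (Real.log σ) ^ p / σ := by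
  set M := ∫ z, |z| ^ 5 + |z| ^ 3 ∂(gaussianReal 0 1)
  have hM : 0 ≤ M := integral_nonneg fun z => by positivity
  refine ⟨1000 * (M + 1), 1, 3, by positivity, one_pos, ?_⟩
  intro σ r hσ hr hr_log φ G H hφ hG hH
  have hσ0 : 0 < σ := one_pos.trans_le hσ
  have h_pt : ∀ z, |H z| ≤ r ^ 3 / σ * (|z| ^ 5 + |z| ^ 3) := fun z => by
    rw [hH, hG, div_eq_mul_one_div, mul_comm (r ^ 3)]
    exact abs_sq_sub_one_mul_integral_le (fun y => hφ y ▸ abs_gaussian_density_le_inv hσ0 y) hr z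
  have h_log : 0 ≤ log σ := log_nonneg hσ
  have h_r3 : r ^ 3 ≤ 1000 * log σ ^ 3 := by
    calc r ^ 3 ≤ (10 * log σ) ^ 3 := pow_le_pow_left₀ hr hr_log 3
      _ = 1000 * log σ ^ 3 := by ring
  calc ∫ z, |H z| ∂(gaussianReal 0 1)
        ≤ ∫ z, r ^ 3 / σ * (|z| ^ 5 + |z| ^ 3) ∂(gaussianReal 0 1) :=
        integral_mono_of_nonneg (.of_forall fun z => abs_nonneg _)
          (((integrable_abs_pow_gaussianReal 0 1 5).add
            (integrable_abs_pow_gaussianReal 0 1 3)).const_mul _) (.of_forall h_pt)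
    _ = r ^ 3 / σ * M := integral_const_mul _ _
    _ ≤ 1000 * log σ ^ 3 / σ * (M + 1) := by gcongr; linarith
    _ = 1000 * (M + 1) * log σ ^ 3 / σ := by ring
end

section
/- Let a, b ≥ 0 with a, b ≤ 5 log σ, σ sufficiently large, and let u, v ~ N(0,1) and ξ ~ N(0,σ²) be independent. Then |E[uv·r(au+bv+ξ)²] − E[u·r(au+bv+ξ)]·E[v·r(au+bv+ξ)]| ≤ C·polylog(σ) for an absolute constant C. -/
/-!
Write r for the ReLU. For a standard Gaussian x and a K-Lipschitz h, centring gives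
|E[x h(x)]| = |E[x (h(x) - h(0))]| ≤ K E[x²] = K. Applied to y ↦ r(a y + c) with the other
variables frozen, this bounds E[u r] by a and E[v r] by b. In the first term, Stein's identity
E[x f(x)] = E[f'(x)] in the variable u turns E[uv r²] into 2a E[v h(v)], where
h(y) = E_u[r(a u + b y + ξ)] is b-Lipschitz, so |E[uv r²]| ≤ 2ab. Altogether the difference is at
most 3ab ≤ 75 (log σ)²; the law of ξ is irrelevant.

Fubini is applied on product spaces without checking integrability: a non-integrable integrand
has Bochner integral 0, for which every bound holds trivially.
-/

open MeasureTheory ProbabilityTheory Real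
open scoped ENNReal NNReal Topology

lemma hasDerivAt_gaussianPDFReal_zero_one (x : ℝ) :
    HasDerivAt (gaussianPDFReal 0 1) (-x * gaussianPDFReal 0 1 x) x := by
  have h : HasDerivAt (fun x : ℝ => -x ^ 2 / 2) (-x) x := by
    have := ((hasDerivAt_pow 2 x).neg).div_const 2
    simp only [Nat.cast_ofNat] at this
    exact this.congr_deriv (by ring)
  have hφ : gaussianPDFReal 0 1 = fun x => (√(2 * π))⁻¹ * rexp (-x ^ 2 / 2) := by
    ext x; simp [gaussianPDFReal]
  rw [hφ]
  exact ((h.exp).const_mul (√(2 * π))⁻¹).congr_deriv (by ring)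

lemma integrable_gaussianReal_iff (μ : ℝ) {v : ℝ≥0} (hv : v ≠ 0) {g : ℝ → ℝ} :
    Integrable g (gaussianReal μ v) ↔ Integrable (fun x => gaussianPDFReal μ v x * g x) := by
  rw [gaussianReal_of_var_ne_zero μ hv,
    integrable_withDensity_iff_integrable_smul' (measurable_gaussianPDF μ v)
      (ae_of_all _ fun _ => gaussianPDF_lt_top)]
  simp only [toReal_gaussianPDF, smul_eq_mul]

theorem integral_mul_eq_integral_deriv_gaussianReal {f f' : ℝ → ℝ}
    (hf : ∀ x, HasDerivAt f (f' x) x) (hf_int : Integrable f (gaussianReal 0 1))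
    (hxf_int : Integrable (fun x => x * f x) (gaussianReal 0 1))
    (hf'_int : Integrable f' (gaussianReal 0 1)) :
    ∫ x, x * f x ∂gaussianReal 0 1 = ∫ x, f' x ∂gaussianReal 0 1 := by
  set φ := gaussianPDFReal 0 1
  rw [integrable_gaussianReal_iff 0 one_ne_zero] at hf_int hxf_int hf'_int
  have hparts := integral_mul_deriv_eq_deriv_mul_of_integrable (u := f) (v := φ) (u' := f')
    (v' := fun x => -x * φ x) (fun x _ => hf x)
    (fun x _ => hasDerivAt_gaussianPDFReal_zero_one x)
    (by convert hxf_int.neg using 1; ext x; simp only [Pi.mul_apply, Pi.neg_apply, φ]; ring)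
    (by simpa [Pi.mul_def, mul_comm] using hf'_int)
    (by simpa [Pi.mul_def, mul_comm] using hf_int)
  simp only [integral_gaussianReal_eq_integral_smul one_ne_zero, smul_eq_mul]
  have hlhs : ∫ x, φ x * (x * f x) = -∫ x, f x * (-x * φ x) := by
    rw [← integral_neg]; congr 1; ext x; ring
  rw [hlhs, hparts, neg_neg]
  congr 1; ext x; ring

lemma hasDerivAt_max_zero_sq (y : ℝ) :
    HasDerivAt (fun s : ℝ => max s 0 ^ 2) (2 * max y 0) y := by
  refine hasDerivAt_of_hasDerivAt_of_ne' (f := fun s : ℝ => max s 0 ^ 2)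
    (g := fun s => 2 * max s 0) (x := 0) (fun y hy => ?_) (by fun_prop) (by fun_prop) y
  rcases hy.lt_or_gt with hy | hy
  · have hzero : (fun _ => (0 : ℝ)) =ᶠ[𝓝 y] fun s : ℝ => max s 0 ^ 2 := by
      filter_upwards [Iio_mem_nhds hy] with s (hs : s < 0)
      simp [max_eq_right hs.le]
    simpa [max_eq_right hy.le] using (hasDerivAt_const y (0 : ℝ)).congr_of_eventuallyEq hzero.symm
  · have hsq : (fun s : ℝ => s ^ 2) =ᶠ[𝓝 y] fun s : ℝ => max s 0 ^ 2 := by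
      filter_upwards [Ioi_mem_nhds hy] with s (hs : 0 < s)
      simp [max_eq_left hs.le]
    simpa [max_eq_left hy.le] using (hasDerivAt_pow 2 y).congr_of_eventuallyEq hsq.symm

lemma lipschitzWith_max_affine_zero (a c : ℝ) :
    LipschitzWith ‖a‖₊ fun x : ℝ => max (a * x + c) 0 :=
  LipschitzWith.of_dist_le_mul fun x y => by
    simpa [Real.dist_eq, ← mul_sub, abs_mul] using abs_max_sub_max_le_abs (a * x + c) (a * y + c) 0

lemma abs_max_affine_zero_le (a c x : ℝ) : |max (a * x + c) 0| ≤ (|a| + |c|) * (1 + |x|) := by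
  calc |max (a * x + c) 0| ≤ |a * x + c| := by
        simpa using abs_max_sub_max_le_abs (a * x + c) 0 0
    _ ≤ |a| * |x| + |c| := by simpa [abs_mul] using abs_add_le (a * x) c
    _ ≤ (|a| + |c|) * (1 + |x|) := by
        nlinarith [abs_nonneg a, abs_nonneg c, abs_nonneg x]

lemma integrable_one_add_abs_pow_gaussianReal (μ : ℝ) (v : ℝ≥0) (n : ℕ) :
    Integrable (fun x : ℝ => (1 + |x|) ^ n) (gaussianReal μ v) := by
  have hid : MemLp id ((n : ℝ≥0) : ℝ≥0∞) (gaussianReal μ v) := memLp_id_gaussianReal (n : ℝ≥0)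
  rw [ENNReal.coe_natCast] at hid
  have : MemLp (fun x : ℝ => 1 + |x|) n (gaussianReal μ v) := (memLp_const (1 : ℝ)).add hid.abs
  refine this.integrable_norm_pow'.congr (ae_of_all _ fun x => ?_)
  simp only [Real.norm_eq_abs, abs_of_nonneg (by positivity : (0 : ℝ) ≤ 1 + |x|)]

lemma integrable_pow_mul_max_affine_zero_pow_gaussianReal (μ : ℝ) (v : ℝ≥0) (k m : ℕ) (a c : ℝ) :
    Integrable (fun x => x ^ k * max (a * x + c) 0 ^ m) (gaussianReal μ v) := by
  refine ((integrable_one_add_abs_pow_gaussianReal μ v (k + m)).const_mul ((|a| + |c|) ^ m)).mono'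
    (by fun_prop) (ae_of_all _ fun x => ?_)
  have hx : |x| ≤ 1 + |x| := by linarith
  rw [Real.norm_eq_abs, abs_mul, abs_pow, abs_pow, pow_add, mul_left_comm, ← mul_pow]
  gcongr
  exact abs_max_affine_zero_le a c x

lemma abs_integral_mul_le_of_lipschitzWith {μ : Measure ℝ} [IsFiniteMeasure μ]
    (hμ : MemLp (fun x => x) 2 μ) (hmean : ∫ x, x ∂μ = 0) {K : ℝ≥0} {h : ℝ → ℝ}
    (hh : LipschitzWith K h) : |∫ x, x * h x ∂μ| ≤ K * Var[fun x => x; μ] := by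
  have hsq : Integrable (fun x => x ^ 2) μ := hμ.integrable_sq
  have hbound : ∀ x, ‖x * (h x - h 0)‖ ≤ K * x ^ 2 := fun x => by
    have := hh.dist_le_mul x 0
    rw [Real.dist_eq, Real.dist_eq, sub_zero] at this
    rw [Real.norm_eq_abs, abs_mul, ← sq_abs x, sq, mul_comm (K : ℝ), mul_assoc]
    exact mul_le_mul_of_nonneg_left (by linarith) (abs_nonneg x)
  have hdev : Integrable (fun x => x * (h x - h 0)) μ :=
    (hsq.const_mul K).mono'
      (continuous_id.mul (hh.continuous.sub continuous_const)).aestronglyMeasurable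
      (ae_of_all _ hbound)
  have hcentered : ∫ x, x * h x ∂μ = ∫ x, x * (h x - h 0) ∂μ := by
    have hsplit : (fun x => x * h x) = fun x => x * (h x - h 0) + h 0 * x := by ext; ring
    rw [hsplit, integral_add hdev ((hμ.integrable one_le_two).const_mul _), integral_const_mul,
      hmean, mul_zero, add_zero]
  rw [hcentered, variance_of_integral_eq_zero aemeasurable_id' hmean, ← integral_const_mul]
  exact norm_integral_le_of_norm_le (hsq.const_mul _) (ae_of_all _ hbound)

lemma abs_integral_mul_gaussianReal_le_of_lipschitzWith {K : ℝ≥0} {h : ℝ → ℝ}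
    (hh : LipschitzWith K h) : |∫ x, x * h x ∂gaussianReal 0 1| ≤ K := by
  simpa [variance_fun_id_gaussianReal] using
    abs_integral_mul_le_of_lipschitzWith (memLp_id_gaussianReal (μ := 0) (v := 1) 2)
      integral_id_gaussianReal hh

lemma abs_integral_mul_max_affine_zero_gaussianReal_le (a c : ℝ) :
    |∫ x, x * max (a * x + c) 0 ∂gaussianReal 0 1| ≤ |a| := by
  simpa using abs_integral_mul_gaussianReal_le_of_lipschitzWith (lipschitzWith_max_affine_zero a c)

lemma abs_integral_prod_le_abs_integral_integral_symm {α β : Type*} [MeasurableSpace α]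
    [MeasurableSpace β] {μ : Measure α} {ν : Measure β} [SFinite μ] [SFinite ν]
    (F : α × β → ℝ) : |∫ p, F p ∂μ.prod ν| ≤ |∫ y, ∫ x, F (x, y) ∂μ ∂ν| := by
  by_cases hF : Integrable F (μ.prod ν)
  · rw [integral_prod_symm F hF]
  · rw [integral_undef hF, abs_zero]
    exact abs_nonneg _

lemma abs_integral_prod_le_of_forall_abs_integral_le {α β : Type*} [MeasurableSpace α]
    [MeasurableSpace β] {μ : Measure α} {ν : Measure β} [SFinite μ] [IsProbabilityMeasure ν]
    {F : α × β → ℝ} {C : ℝ} (h : ∀ y, |∫ x, F (x, y) ∂μ| ≤ C) :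
    |∫ p, F p ∂μ.prod ν| ≤ C :=
  (abs_integral_prod_le_abs_integral_integral_symm F).trans <| by
    simpa using norm_integral_le_of_norm_le_const (μ := ν) (f := fun y => ∫ x, F (x, y) ∂μ)
      (ae_of_all _ h)

lemma integral_mul_max_affine_zero_sq_gaussianReal (a c : ℝ) :
    ∫ x, x * max (a * x + c) 0 ^ 2 ∂gaussianReal 0 1
      = 2 * a * ∫ x, max (a * x + c) 0 ∂gaussianReal 0 1 := by
  have hderiv : ∀ x, HasDerivAt (fun x => max (a * x + c) 0 ^ 2) (2 * a * max (a * x + c) 0) x :=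
    fun x => ((hasDerivAt_max_zero_sq _).comp x
      (((hasDerivAt_id x).const_mul a).add_const c)).congr_deriv (by simp only [id]; ring)
  rw [integral_mul_eq_integral_deriv_gaussianReal hderiv, integral_const_mul]
  · simpa using integrable_pow_mul_max_affine_zero_pow_gaussianReal 0 1 0 2 a c
  · simpa using integrable_pow_mul_max_affine_zero_pow_gaussianReal 0 1 1 2 a c
  · simpa using (integrable_pow_mul_max_affine_zero_pow_gaussianReal 0 1 0 1 a c).const_mul (2 * a)

lemma abs_integral_mul_mul_max_affine_zero_sq_gaussianReal_prod_le (a b c : ℝ) :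
    |∫ p : ℝ × ℝ, p.1 * p.2 * max (a * p.1 + b * p.2 + c) 0 ^ 2
        ∂(gaussianReal 0 1).prod (gaussianReal 0 1)| ≤ 2 * |a| * |b| := by
  set G := gaussianReal 0 1
  set h : ℝ → ℝ := fun y => ∫ x, max (a * x + (b * y + c)) 0 ∂G
  have hint : ∀ y, Integrable (fun x => max (a * x + (b * y + c)) 0) G := fun y => by
    simpa using integrable_pow_mul_max_affine_zero_pow_gaussianReal 0 1 0 1 a (b * y + c)
  have hh : LipschitzWith ‖b‖₊ h := LipschitzWith.of_dist_le_mul fun y y' => by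
    rw [Real.dist_eq, Real.dist_eq, coe_nnnorm, Real.norm_eq_abs, ← integral_sub (hint y) (hint y')]
    simpa using norm_integral_le_of_norm_le_const (μ := G) (C := |b| * |y - y'|)
      (f := fun x => max (a * x + (b * y + c)) 0 - max (a * x + (b * y' + c)) 0)
      (ae_of_all _ fun x => by
        simpa [abs_mul, ← mul_sub] using
          abs_max_sub_max_le_abs (a * x + (b * y + c)) (a * x + (b * y' + c)) 0)
  have hinner : ∀ y, ∫ x, x * y * max (a * x + b * y + c) 0 ^ 2 ∂G = 2 * a * (y * h y) := by
    intro y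
    calc ∫ x, x * y * max (a * x + b * y + c) 0 ^ 2 ∂G
        = y * ∫ x, x * max (a * x + (b * y + c)) 0 ^ 2 ∂G := by
          rw [← integral_const_mul]; congr 1; ext x; rw [add_assoc]; ring
      _ = 2 * a * (y * h y) := by rw [integral_mul_max_affine_zero_sq_gaussianReal]; ring
  calc _ ≤ |∫ y, ∫ x, x * y * max (a * x + b * y + c) 0 ^ 2 ∂G ∂G| :=
        abs_integral_prod_le_abs_integral_integral_symm _
    _ = 2 * |a| * |∫ y, y * h y ∂G| := by
        simp_rw [hinner, integral_const_mul, abs_mul, abs_two]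
    _ ≤ 2 * |a| * |b| := by
        refine mul_le_mul_of_nonneg_left ?_ (by positivity)
        simpa using abs_integral_mul_gaussianReal_le_of_lipschitzWith hh

section IndepFun

variable {Ω : Type*} [MeasurableSpace Ω] {P : Measure Ω} [IsProbabilityMeasure P]

lemma abs_integral_mul_max_affine_zero_le_of_indepFun {X W : Ω → ℝ} (hX : AEMeasurable X P)
    (hW : AEMeasurable W P) (hXlaw : P.map X = gaussianReal 0 1) (hXW : IndepFun X W P) (a : ℝ) :
    |∫ ω, X ω * max (a * X ω + W ω) 0 ∂P| ≤ |a| := by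
  have := Measure.isProbabilityMeasure_map (μ := P) hW
  have hlaw : P.map (fun ω => (X ω, W ω)) = (gaussianReal 0 1).prod (P.map W) := by
    rw [(indepFun_iff_map_prod_eq_prod_map_map hX hW).1 hXW, hXlaw]
  have hcomp := integral_map (hX.prodMk hW) (f := fun p : ℝ × ℝ => p.1 * max (a * p.1 + p.2) 0)
    (by fun_prop : Continuous _).aestronglyMeasurable
  rw [hlaw] at hcomp
  rw [← hcomp]
  exact abs_integral_prod_le_of_forall_abs_integral_le
    (abs_integral_mul_max_affine_zero_gaussianReal_le a)

lemma abs_integral_mul_mul_max_affine_zero_sq_le_of_indepFun {X Y W : Ω → ℝ}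
    (hX : AEMeasurable X P) (hY : AEMeasurable Y P) (hW : AEMeasurable W P)
    (hXlaw : P.map X = gaussianReal 0 1) (hYlaw : P.map Y = gaussianReal 0 1)
    (hXY : IndepFun X Y P) (hXYW : IndepFun (fun ω => (X ω, Y ω)) W P) (a b : ℝ) :
    |∫ ω, X ω * Y ω * max (a * X ω + b * Y ω + W ω) 0 ^ 2 ∂P| ≤ 2 * |a| * |b| := by
  have := Measure.isProbabilityMeasure_map (μ := P) hW
  have hlaw : P.map (fun ω => ((X ω, Y ω), W ω))
      = ((gaussianReal 0 1).prod (gaussianReal 0 1)).prod (P.map W) := by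
    rw [(indepFun_iff_map_prod_eq_prod_map_map (hX.prodMk hY) hW).1 hXYW,
      (indepFun_iff_map_prod_eq_prod_map_map hX hY).1 hXY, hXlaw, hYlaw]
  have hcomp := integral_map ((hX.prodMk hY).prodMk hW)
    (f := fun p : (ℝ × ℝ) × ℝ => p.1.1 * p.1.2 * max (a * p.1.1 + b * p.1.2 + p.2) 0 ^ 2)
    (by fun_prop : Continuous _).aestronglyMeasurable
  rw [hlaw] at hcomp
  rw [← hcomp]
  exact abs_integral_prod_le_of_forall_abs_integral_le
    (abs_integral_mul_mul_max_affine_zero_sq_gaussianReal_prod_le a b)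

end IndepFun

theorem stmt7 :
    ∃ (C σ₀ : ℝ) (p : ℕ), 0 < C ∧ 0 < σ₀ ∧
      ∀ (σ a b : ℝ), σ₀ ≤ σ → 0 ≤ a → 0 ≤ b → a ≤ 5 * Real.log σ → b ≤ 5 * Real.log σ →
      ∀ (Ω : Type) (_ : MeasureSpace Ω) (_ : IsProbabilityMeasure (ℙ : Measure Ω))
        (u v ξ : Ω → ℝ),
        Measure.map u ℙ = gaussianReal 0 1 →
        Measure.map v ℙ = gaussianReal 0 1 →
        Measure.map ξ ℙ = gaussianReal 0 (Real.toNNReal (σ ^ 2)) →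
        iIndepFun ![u, v, ξ] ℙ →
        |(∫ ω, u ω * v ω * (max (a * u ω + b * v ω + ξ ω) 0) ^ 2 ∂ℙ)
          - (∫ ω, u ω * max (a * u ω + b * v ω + ξ ω) 0 ∂ℙ)
            * (∫ ω, v ω * max (a * u ω + b * v ω + ξ ω) 0 ∂ℙ)| ≤
          C * (Real.log σ) ^ p := by
  refine ⟨75, 1, 2, by norm_num, one_pos, ?_⟩
  intro σ a b _ ha hb ha5 hb5 Ω _ _ u v ξ hu hv hξ hind
  have hu_ae : AEMeasurable u ℙ := aemeasurable_of_map_neZero (by rw [hu]; infer_instance)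
  have hv_ae : AEMeasurable v ℙ := aemeasurable_of_map_neZero (by rw [hv]; infer_instance)
  have hξ_ae : AEMeasurable ξ ℙ := aemeasurable_of_map_neZero (by rw [hξ]; infer_instance)
  have hmeas : ∀ i, AEMeasurable (![u, v, ξ] i) ℙ := fun i => by
    fin_cases i <;> assumption
  have hJ1 := abs_integral_mul_mul_max_affine_zero_sq_le_of_indepFun hu_ae hv_ae hξ_ae hu hv
    (hind.indepFun (i := 0) (j := 1) (by decide))
    (hind.indepFun_prodMk₀ hmeas 0 1 2 (by decide) (by decide)) a b
  have hJ2 := abs_integral_mul_max_affine_zero_le_of_indepFun (W := fun ω => b * v ω + ξ ω) hu_ae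
    ((hv_ae.const_mul b).add hξ_ae) hu
    ((hind.indepFun_prodMk₀ hmeas 1 2 0 (by decide) (by decide)).comp
      ((measurable_fst.const_mul b).add measurable_snd) measurable_id).symm a
  have hJ3 := abs_integral_mul_max_affine_zero_le_of_indepFun (W := fun ω => a * u ω + ξ ω) hv_ae
    ((hu_ae.const_mul a).add hξ_ae) hv
    ((hind.indepFun_prodMk₀ hmeas 0 2 1 (by decide) (by decide)).comp
      ((measurable_fst.const_mul a).add measurable_snd) measurable_id).symm b
  simp only [← add_assoc] at hJ2
  simp only [show ∀ ω, b * v ω + (a * u ω + ξ ω) = a * u ω + b * v ω + ξ ω from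
    fun ω => by ring] at hJ3
  calc _ ≤ |∫ ω, u ω * v ω * max (a * u ω + b * v ω + ξ ω) 0 ^ 2 ∂ℙ|
        + |∫ ω, u ω * max (a * u ω + b * v ω + ξ ω) 0 ∂ℙ|
          * |∫ ω, v ω * max (a * u ω + b * v ω + ξ ω) 0 ∂ℙ| := by
        rw [← abs_mul]; exact abs_sub _ _
    _ ≤ 2 * |a| * |b| + |a| * |b| :=
        add_le_add hJ1 (mul_le_mul hJ2 hJ3 (abs_nonneg _) (abs_nonneg _))
    _ ≤ 75 * Real.log σ ^ 2 := by
        rw [abs_of_nonneg ha, abs_of_nonneg hb]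
        nlinarith [mul_le_mul ha5 hb5 hb (by linarith)]
end

section
/- Denoising via ReLU and offset (deterministic lemma): Let h ∈ ℝ^m be nonnegative with at most k nonzero coordinates, and let ĥ ∈ ℝ^m satisfy ‖ĥ − h‖_∞ ≤ δ‖h‖ for some δ > 0. Set b = −δ‖h‖. Then: (i) for every i with h_i = 0, max(ĥ_i + b, 0) = 0; (ii) for every i with h_i > 0, |max(ĥ_i + b, 0) − h_i| ≤ 2δ‖h‖; and consequently (iii) ∑ᵢ |max(ĥ_i+b,0) − h_i|² ≤ 4kδ²‖h‖². -/
open Finset Real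

/-- Denoising via ReLU and offset (deterministic lemma). -/
theorem stmt15 (m k : ℕ) (h hhat : Fin m → ℝ) (δ : ℝ) (hδ : 0 < δ)
    (hnonneg : ∀ i, 0 ≤ h i)
    (hsparse : (Finset.univ.filter (fun i => h i ≠ 0)).card ≤ k)
    (hinf : ∀ i, |hhat i - h i| ≤ δ * Real.sqrt (∑ i, (h i) ^ 2)) :
    (∀ i, h i = 0 → max (hhat i + (-(δ * Real.sqrt (∑ i, (h i) ^ 2)))) 0 = 0) ∧
    (∀ i, 0 < h i →
      |max (hhat i + (-(δ * Real.sqrt (∑ i, (h i) ^ 2)))) 0 - h i| ≤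
        2 * δ * Real.sqrt (∑ i, (h i) ^ 2)) ∧
    ∑ i : Fin m, (max (hhat i + (-(δ * Real.sqrt (∑ i, (h i) ^ 2)))) 0 - h i) ^ 2 ≤
      4 * k * δ ^ 2 * (∑ i, (h i) ^ 2) := by
  set D := δ * Real.sqrt (∑ i, (h i) ^ 2) with hD
  have hS : Real.sqrt (∑ i, (h i) ^ 2) ^ 2 = ∑ i, (h i) ^ 2 := by
    rw [Real.sq_sqrt]
    exact Finset.sum_nonneg fun i _ => sq_nonneg _
  have hDnn : 0 ≤ D := mul_nonneg hδ.le (Real.sqrt_nonneg _)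
  have part1 : ∀ i, h i = 0 → max (hhat i + (-D)) 0 = 0 := by
    intro i hi
    have := hinf i
    rw [hi, sub_zero] at this
    have h2 : hhat i + -D ≤ 0 := by linarith [(abs_le.mp this).2]
    exact max_eq_right h2
  have part2 : ∀ i, |max (hhat i + (-D)) 0 - h i| ≤ 2 * D := by
    intro i
    have hi := abs_le.mp (hinf i)
    rcases le_or_gt 0 (hhat i + (-D)) with hc | hc
    · rw [max_eq_left hc]
      rw [abs_le]; constructor <;> linarith [hi.1, hi.2]
    · rw [max_eq_right hc.le, abs_le]
      constructor <;> linarith [hi.1, hi.2, hnonneg i]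
  refine ⟨part1, fun i _ => (part2 i).trans_eq (mul_assoc 2 δ _).symm, ?_⟩
  have hsub : ∀ i ∉ Finset.univ.filter (fun i => h i ≠ 0),
      (max (hhat i + (-D)) 0 - h i) ^ 2 = 0 := by
    intro i hi
    simp only [Finset.mem_filter, Finset.mem_univ, true_and, not_not] at hi
    rw [part1 i hi, hi]; ring
  rw [← Finset.sum_filter_of_ne (p := fun i => h i ≠ 0) (by
    intro i _ hne
    by_contra hz
    exact hne (by rw [part1 i hz, hz]; ring))]
  calc ∑ i ∈ Finset.univ.filter (fun i => h i ≠ 0), (max (hhat i + (-D)) 0 - h i) ^ 2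
      ≤ ∑ i ∈ Finset.univ.filter (fun i => h i ≠ 0), (2 * D) ^ 2 := by
        apply Finset.sum_le_sum
        intro i _
        have := part2 i
        calc (max (hhat i + (-D)) 0 - h i) ^ 2 = |max (hhat i + (-D)) 0 - h i| ^ 2 := (sq_abs _).symm
          _ ≤ (2 * D) ^ 2 := by apply pow_le_pow_left₀ (abs_nonneg _) this
    _ = (Finset.univ.filter (fun i => h i ≠ 0)).card * (2 * D) ^ 2 := by
        rw [Finset.sum_const, nsmul_eq_mul]
    _ ≤ k * (2 * D) ^ 2 := by
        apply mul_le_mul_of_nonneg_right _ (sq_nonneg _)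
        exact_mod_cast hsparse
    _ = 4 * k * δ ^ 2 * (∑ i, (h i) ^ 2) := by
        rw [hD, mul_pow, mul_pow, hS]; ring
end
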